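/- Suppose f: E(G) → E(H) is cycle-continuous and H is bridgeless. Then for every 3-edge-cut {e₁, e₂, e₃} of G, the image set {f(e₁), f(e₂), f(e₃)} is a 3-edge-cut of H (in particular the three images are distinct). -/

import Mathlib

/-- A finite multigraph: a vertex type, an edge type, and two (arbitrarily ordered)
endpoints for each edge.  Loops (`fst e = snd e`) and parallel edges are allowed. -/
structure Multigraph where
  V : Type
  E : Type
  fst : E → V
  snd : E → V
  [fintypeV : Fintype V]
  [fintypeE : Fintype E]
  [decEqV : DecidableEq V]
  [decEqE : DecidableEq E]

attribute [instance] Multigraph.fintypeV Multigraph.fintypeE Multigraph.decEqV Multigraph.decEqE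

namespace Multigraph

/-- The number of times edge `e` is incident with vertex `v` (a loop counts twice). -/
def inc (G : Multigraph) (v : G.V) (e : G.E) : ℕ :=
  (if G.fst e = v then 1 else 0) + (if G.snd e = v then 1 else 0)

/-- A set of edges is a *cycle* if every vertex is incident with an even number of
its edges (loops counted twice). -/
def IsCycle (G : Multigraph) (C : Finset G.E) : Prop :=
  ∀ v : G.V, Even (∑ e ∈ C, G.inc v e)

/-- The preimage of a finite set of edges under a mapping. -/
def preim {α β : Type} [Fintype α] [DecidableEq β] (f : α → β) (C : Finset β) : Finset α :=
  Finset.univ.filter (fun e => f e ∈ C)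

/-- A mapping `f : E(G) → E(H)` is *cycle-continuous* if the preimage of every
cycle of `H` is a cycle of `G`. -/
def CycleContinuous (G H : Multigraph) (f : G.E → H.E) : Prop :=
  ∀ C : Finset H.E, H.IsCycle C → G.IsCycle (preim f C)

instance decXor' (a b : Prop) [Decidable a] [Decidable b] : Decidable (Xor' a b) := by
  unfold Xor'; infer_instance

/-- The cut `δ(U)`: edges with exactly one endpoint in `U`. -/
def cutOf (G : Multigraph) (U : Finset G.V) : Finset G.E :=
  Finset.univ.filter (fun e => Xor' (G.fst e ∈ U) (G.snd e ∈ U))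

/-- A set of edges is a *cut* if it equals `δ(U)` for some vertex set `U`. -/
def IsCut (G : Multigraph) (C : Finset G.E) : Prop :=
  ∃ U : Finset G.V, C = G.cutOf U

/-- The set of edges incident with a vertex `v`. -/
def incidentEdges (G : Multigraph) (v : G.V) : Finset G.E :=
  Finset.univ.filter (fun e => G.fst e = v ∨ G.snd e = v)

/-- The degree of a vertex (loops counted twice). -/
def degree (G : Multigraph) (v : G.V) : ℕ := ∑ e : G.E, G.inc v e

def Cubic (G : Multigraph) : Prop := ∀ v : G.V, G.degree v = 3

/-- A graph is bridgeless if no cut consists of exactly one edge. -/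
def Bridgeless (G : Multigraph) : Prop := ∀ C : Finset G.E, G.IsCut C → C.card ≠ 1

/-- A graph is connected if it has a vertex and every nontrivial vertex set
has a nonempty cut. -/
def Connected (G : Multigraph) : Prop :=
  Nonempty G.V ∧ ∀ U : Finset G.V, U ≠ ∅ → U ≠ Finset.univ → G.cutOf U ≠ ∅

/-- `K₂³`: the graph with two vertices joined by three parallel edges. -/
def K23 : Multigraph where
  V := Bool
  E := Fin 3
  fst := fun _ => false
  snd := fun _ => true

/-- A snark: a connected cubic bridgeless graph with no cycle-continuous mapping to `K₂³`. -/
def IsSnark (G : Multigraph) : Prop :=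
  G.Cubic ∧ G.Connected ∧ G.Bridgeless ∧ ¬ ∃ f : G.E → K23.E, CycleContinuous G K23 f

/-- A proper 3-edge-coloring: distinct edges sharing a vertex get distinct colors. -/
def Proper3EdgeColorable (G : Multigraph) : Prop :=
  ∃ c : G.E → Fin 3, ∀ e e' : G.E, e ≠ e' →
    (∃ v : G.V, 0 < G.inc v e ∧ 0 < G.inc v e') → c e ≠ c e'

/-- An isomorphism of multigraphs: bijections on vertices and edges preserving
incidence (the two endpoints of an edge may be matched in either order). -/
structure Iso (G H : Multigraph) where
  φ : G.V ≃ H.V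
  ε : G.E ≃ H.E
  ends : ∀ e : G.E,
    (φ (G.fst e) = H.fst (ε e) ∧ φ (G.snd e) = H.snd (ε e)) ∨
    (φ (G.fst e) = H.snd (ε e) ∧ φ (G.snd e) = H.fst (ε e))

/-- Edge-transitivity: any edge can be carried to any other by an automorphism. -/
def EdgeTransitive (K : Multigraph) : Prop :=
  ∀ e₁ e₂ : K.E, ∃ σ : Iso K K, σ.ε e₁ = e₂

/-- Adjacency of vertices. -/
def Adj (G : Multigraph) (u v : G.V) : Prop :=
  ∃ e : G.E, (G.fst e = u ∧ G.snd e = v) ∨ (G.fst e = v ∧ G.snd e = u)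

/-- Deleting an edge. -/
def deleteEdge (G : Multigraph) (e : G.E) : Multigraph where
  V := G.V
  E := {e' : G.E // e' ≠ e}
  fst := fun e' => G.fst e'.1
  snd := fun e' => G.snd e'.1

/-- Contracting an edge `e`: its two endpoints are identified (the endpoint `snd e`
is merged into `fst e`), the loop arising from `e` is deleted, all other edges kept. -/
def contract (G : Multigraph) (e : G.E) : Multigraph where
  V := G.V
  E := {e' : G.E // e' ≠ e}
  fst := fun e' => if G.fst e'.1 = G.snd e then G.fst e else G.fst e'.1
  snd := fun e' => if G.snd e'.1 = G.snd e then G.fst e else G.snd e'.1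

/-- The 2-join of `G₁` and `G₂` along edges `e₁`, `e₂`: delete `e₁` and `e₂` and
add two new edges `x₁x₂` (coded `Sum.inr false`) and `y₁y₂` (coded `Sum.inr true`),
where `xᵢ = fst eᵢ` and `yᵢ = snd eᵢ`. -/
def twoJoin (G₁ G₂ : Multigraph) (e₁ : G₁.E) (e₂ : G₂.E) : Multigraph where
  V := G₁.V ⊕ G₂.V
  E := ({a : G₁.E // a ≠ e₁} ⊕ {b : G₂.E // b ≠ e₂}) ⊕ Bool
  fst := fun e => match e with
    | .inl (.inl a) => .inl (G₁.fst a.1)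
    | .inl (.inr b) => .inr (G₂.fst b.1)
    | .inr false => .inl (G₁.fst e₁)
    | .inr true => .inl (G₁.snd e₁)
  snd := fun e => match e with
    | .inl (.inl a) => .inl (G₁.snd a.1)
    | .inl (.inr b) => .inr (G₂.snd b.1)
    | .inr false => .inr (G₂.fst e₂)
    | .inr true => .inr (G₂.snd e₂)

/-- The natural mapping `E(G₁) → E(G₁ ≡₂ G₂)`: identity on `E(G₁) \ {e₁}`,
and `e₁` goes to the new edge `x₁x₂`. -/
def twoJoinMapL (G₁ G₂ : Multigraph) (e₁ : G₁.E) (e₂ : G₂.E) :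
    G₁.E → (twoJoin G₁ G₂ e₁ e₂).E :=
  fun a => if h : a = e₁ then .inr false else .inl (.inl ⟨a, h⟩)

/-- The natural mapping `E(G₂) → E(G₁ ≡₂ G₂)`: identity on `E(G₂) \ {e₂}`,
and `e₂` goes to the new edge `x₁x₂`. -/
def twoJoinMapR (G₁ G₂ : Multigraph) (e₁ : G₁.E) (e₂ : G₂.E) :
    G₂.E → (twoJoin G₁ G₂ e₁ e₂).E :=
  fun b => if h : b = e₂ then .inr false else .inl (.inr ⟨b, h⟩)

lemma ne_of_inc_eq_zero (G : Multigraph) {u : G.V} {e : G.E} (h : G.inc u e = 0) :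
    G.fst e ≠ u ∧ G.snd e ≠ u := by
  unfold inc at h
  constructor <;> intro he <;> simp [he] at h

/-- The endpoint of `e` other than `u`. -/
def otherEnd (G : Multigraph) (u : G.V) (e : G.E) : G.V :=
  if G.fst e = u then G.snd e else G.fst e

lemma otherEnd_ne (G : Multigraph) {u : G.V} {e : G.E} (h : G.inc u e = 1) :
    G.otherEnd u e ≠ u := by
  unfold inc at h
  unfold otherEnd
  split_ifs with hf
  · intro hs; rw [hf, hs] at h; simp at h
  · exact hf

/-- The 3-join of `G₁` and `G₂`: the degree-3 vertices `u₁`, `u₂` are deleted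
(`aᵢ j`, `j = 0,1,2`, are the three edges at `uᵢ`, none of them a loop, and all other
edges avoid `uᵢ`), and three new matching edges (coded `Sum.inr j`) are added, the
`j`-th joining the other endpoint of `a₁ j` to the other endpoint of `a₂ j`. -/
def threeJoin (G₁ G₂ : Multigraph) (u₁ : G₁.V) (u₂ : G₂.V)
    (a₁ : Fin 3 → G₁.E) (a₂ : Fin 3 → G₂.E)
    (h₁ : ∀ j, G₁.inc u₁ (a₁ j) = 1) (h₂ : ∀ j, G₂.inc u₂ (a₂ j) = 1)
    (hz₁ : ∀ e, (∀ j, e ≠ a₁ j) → G₁.inc u₁ e = 0)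
    (hz₂ : ∀ e, (∀ j, e ≠ a₂ j) → G₂.inc u₂ e = 0) : Multigraph where
  V := {v : G₁.V // v ≠ u₁} ⊕ {v : G₂.V // v ≠ u₂}
  E := ({e : G₁.E // ∀ j, e ≠ a₁ j} ⊕ {e : G₂.E // ∀ j, e ≠ a₂ j}) ⊕ Fin 3
  fst := fun e => match e with
    | .inl (.inl a) => .inl ⟨G₁.fst a.1, (ne_of_inc_eq_zero G₁ (hz₁ a.1 a.2)).1⟩
    | .inl (.inr b) => .inr ⟨G₂.fst b.1, (ne_of_inc_eq_zero G₂ (hz₂ b.1 b.2)).1⟩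
    | .inr j => .inl ⟨G₁.otherEnd u₁ (a₁ j), otherEnd_ne G₁ (h₁ j)⟩
  snd := fun e => match e with
    | .inl (.inl a) => .inl ⟨G₁.snd a.1, (ne_of_inc_eq_zero G₁ (hz₁ a.1 a.2)).2⟩
    | .inl (.inr b) => .inr ⟨G₂.snd b.1, (ne_of_inc_eq_zero G₂ (hz₂ b.1 b.2)).2⟩
    | .inr j => .inr ⟨G₂.otherEnd u₂ (a₂ j), otherEnd_ne G₂ (h₂ j)⟩

/-- The natural mapping `E(G₁) → E(G₁ ≡ G₂)`: identity on edges not incident with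
`u₁`, and the edge `a₁ j` at `u₁` goes to the `j`-th added matching edge. -/
noncomputable def threeJoinMapL (G₁ G₂ : Multigraph) (u₁ : G₁.V) (u₂ : G₂.V)
    (a₁ : Fin 3 → G₁.E) (a₂ : Fin 3 → G₂.E)
    (h₁ : ∀ j, G₁.inc u₁ (a₁ j) = 1) (h₂ : ∀ j, G₂.inc u₂ (a₂ j) = 1)
    (hz₁ : ∀ e, (∀ j, e ≠ a₁ j) → G₁.inc u₁ e = 0)
    (hz₂ : ∀ e, (∀ j, e ≠ a₂ j) → G₂.inc u₂ e = 0) :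
    G₁.E → (threeJoin G₁ G₂ u₁ u₂ a₁ a₂ h₁ h₂ hz₁ hz₂).E :=
  fun e => if h : ∀ j, e ≠ a₁ j then .inl (.inl ⟨e, h⟩)
    else .inr (Classical.choose (by push_neg at h; exact h))

/-- The natural mapping `E(G₂) → E(G₁ ≡ G₂)`. -/
noncomputable def threeJoinMapR (G₁ G₂ : Multigraph) (u₁ : G₁.V) (u₂ : G₂.V)
    (a₁ : Fin 3 → G₁.E) (a₂ : Fin 3 → G₂.E)
    (h₁ : ∀ j, G₁.inc u₁ (a₁ j) = 1) (h₂ : ∀ j, G₂.inc u₂ (a₂ j) = 1)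
    (hz₁ : ∀ e, (∀ j, e ≠ a₁ j) → G₁.inc u₁ e = 0)
    (hz₂ : ∀ e, (∀ j, e ≠ a₂ j) → G₂.inc u₂ e = 0) :
    G₂.E → (threeJoin G₁ G₂ u₁ u₂ a₁ a₂ h₁ h₂ hz₁ hz₂).E :=
  fun e => if h : ∀ j, e ≠ a₂ j then .inl (.inr ⟨e, h⟩)
    else .inr (Classical.choose (by push_neg at h; exact h))

/-- The set of edges of `H` to which an odd number of edges of `C ⊆ E(G)` map. -/
def oddImage (G H : Multigraph) (f : G.E → H.E) (C : Finset G.E) : Finset H.E :=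
  Finset.univ.filter (fun e' => Odd ((C.filter (fun e => f e = e')).card))

end Multigraph

/-!
Over `ZMod 2`, the cycles of a graph are the kernel of its incidence matrix `B` and its cuts
are the image of `Bᵀ`, so by duality a set of edges is a cut exactly when it meets every cycle
in an even number of edges. For a cycle-continuous `f` and a cut `C` of `G`, the edges of `H`
hit an odd number of times by `C` therefore form a cut of `H`: their intersection with a cycle
`D` has the parity of `C ∩ f⁻¹(D)`. For a 3-edge-cut `{e₁, e₂, e₃}` with `f e₁ = f e₂` this cut
is the single edge `f e₃`, a bridge; with distinct images it is `{f e₁, f e₂, f e₃}`.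
-/

open Finset Matrix

theorem Matrix.exists_transpose_mulVec_eq_of_forall_dotProduct_eq_zero {K m n : Type*} [Field K]
    [Fintype m] [Fintype n] [DecidableEq m] [DecidableEq n] (B : Matrix m n K) (x : n → K)
    (hx : ∀ z, B *ᵥ z = 0 → x ⬝ᵥ z = 0) : ∃ y, Bᵀ *ᵥ y = x := by
  have hmem : dotProductEquiv K n x ∈ (LinearMap.ker B.mulVecLin).dualAnnihilator :=
    (Submodule.mem_dualAnnihilator _).2 fun z hz => hx z hz
  rw [← LinearMap.range_dualMap_eq_dualAnnihilator_ker] at hmem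
  obtain ⟨ψ, hψ⟩ := hmem
  refine ⟨(dotProductEquiv K m).symm ψ,
    (dotProductEquiv K n).injective (LinearMap.ext fun z => ?_)⟩
  rw [← hψ, dotProductEquiv_apply_apply, mulVec_transpose, ← dotProduct_mulVec]
  exact LinearMap.congr_fun ((dotProductEquiv K m).apply_symm_apply ψ) (B *ᵥ z)

namespace Finset

variable {α : Type*} [DecidableEq α]

def charVec (s : Finset α) : α → ZMod 2 :=
  fun a => if a ∈ s then 1 else 0

theorem charVec_injective : Function.Injective (charVec (α := α)) := by
  intro s t h
  ext a
  have := congr_fun h a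
  by_cases hs : a ∈ s <;> by_cases ht : a ∈ t <;> simp_all [charVec]

variable [Fintype α]

theorem charVec_dotProduct (s t : Finset α) : s.charVec ⬝ᵥ t.charVec = #(s ∩ t) := by
  simp only [charVec, dotProduct, mul_ite, mul_one, mul_zero, ← ite_and, ← mem_inter]
  rw [sum_boole]
  congr 2
  ext
  simp [and_comm]

theorem charVec_filter_eq_one (y : α → ZMod 2) : charVec {a | y a = 1} = y := by
  funext a
  have : y a = 0 ∨ y a = 1 := by generalize y a = b; decide +revert
  rcases this with h | h <;> simp [charVec, mem_filter, h]

end Finset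

namespace Multigraph

section Incidence

variable (G : Multigraph)

def incMatrix : Matrix G.V G.E (ZMod 2) := fun v e => G.inc v e

theorem incMatrix_mulVec_charVec (C : Finset G.E) (v : G.V) :
    (G.incMatrix *ᵥ C.charVec) v = ∑ e ∈ C, G.inc v e := by
  simp [incMatrix, charVec, mulVec, dotProduct]

theorem isCycle_iff_incMatrix_mulVec_eq_zero (C : Finset G.E) :
    G.IsCycle C ↔ G.incMatrix *ᵥ C.charVec = 0 := by
  simp only [IsCycle, funext_iff, incMatrix_mulVec_charVec, Pi.zero_apply,
    ZMod.natCast_eq_zero_iff_even]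

theorem incMatrix_transpose_mulVec_charVec (U : Finset G.V) :
    G.incMatrixᵀ *ᵥ U.charVec = (G.cutOf U).charVec := by
  funext e
  simp only [mulVec_transpose, vecMul, dotProduct, incMatrix, inc, charVec, cutOf, mem_filter,
    mem_univ, true_and, Nat.cast_add, Nat.cast_ite, Nat.cast_one, Nat.cast_zero, mul_add, mul_ite,
    mul_one, mul_zero, sum_add_distrib, sum_ite_eq]
  by_cases h₁ : G.fst e ∈ U <;> by_cases h₂ : G.snd e ∈ U <;>
    simp [h₁, h₂, Xor', CharTwo.add_self_eq_zero]

theorem isCut_iff_forall_isCycle_even_card_inter (T : Finset G.E) :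
    G.IsCut T ↔ ∀ D, G.IsCycle D → Even #(T ∩ D) := by
  simp only [← ZMod.natCast_eq_zero_iff_even, ← charVec_dotProduct,
    isCycle_iff_incMatrix_mulVec_eq_zero]
  constructor
  · rintro ⟨U, rfl⟩ D hD
    rw [← incMatrix_transpose_mulVec_charVec, mulVec_transpose, ← dotProduct_mulVec, hD,
      dotProduct_zero]
  · intro h
    obtain ⟨y, hy⟩ := G.incMatrix.exists_transpose_mulVec_eq_of_forall_dotProduct_eq_zero
      T.charVec fun z hz => by
        rw [← charVec_filter_eq_one z] at hz ⊢
        exact h _ hz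
    refine ⟨({v | y v = 1} : Finset G.V), charVec_injective ?_⟩
    rw [← incMatrix_transpose_mulVec_charVec, charVec_filter_eq_one, hy]

end Incidence

section OddImage

variable {G H : Multigraph} {f : G.E → H.E}

theorem natCast_card_oddImage_inter (C : Finset G.E) (D : Finset H.E) :
    (#(oddImage G H f C ∩ D) : ZMod 2) = #(C ∩ preim f D) := by
  have hfibres : #(C ∩ preim f D) = ∑ e' ∈ D, #{e ∈ C | f e = e'} := by
    rw [card_eq_sum_card_fiberwise fun e he => by simpa [preim] using (mem_inter.1 he).2]
    refine sum_congr rfl fun e' he' => congr_arg card (ext fun e => ?_)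
    simp only [mem_filter, mem_inter, preim, mem_univ, true_and]
    exact ⟨fun h => ⟨h.1.1, h.2⟩, fun h => ⟨⟨h.1, h.2 ▸ he'⟩, h.2⟩⟩
  rw [hfibres, inter_comm, ← filter_mem_eq_inter, card_filter, Nat.cast_sum, Nat.cast_sum]
  refine sum_congr rfl fun e' _ => ?_
  simp only [oddImage, mem_filter, mem_univ, true_and]
  split_ifs with hodd
  · rw [Nat.cast_one, ZMod.natCast_eq_one_iff_odd.2 hodd]
  · rw [Nat.cast_zero, ZMod.natCast_eq_zero_iff_even.2 (Nat.not_odd_iff_even.1 hodd)]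

theorem CycleContinuous.isCut_oddImage (hf : CycleContinuous G H f) {C : Finset G.E}
    (hC : G.IsCut C) : H.IsCut (oddImage G H f C) := by
  rw [isCut_iff_forall_isCycle_even_card_inter] at hC ⊢
  intro D hD
  rw [← ZMod.natCast_eq_zero_iff_even, natCast_card_oddImage_inter, ZMod.natCast_eq_zero_iff_even]
  exact hC _ (hf D hD)

theorem oddImage_eq_image_of_injOn {C : Finset G.E} (hf : Set.InjOn f C) :
    oddImage G H f C = C.image f := by
  ext e'
  simp only [oddImage, mem_filter, mem_univ, true_and, mem_image]
  constructor
  · intro hodd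
    obtain ⟨e, he⟩ := card_pos.1 hodd.pos
    exact ⟨e, mem_filter.1 he⟩
  · rintro ⟨e, he, rfl⟩
    have hfibre : {x ∈ C | f x = f e} = {e} := by
      ext x
      simp only [mem_filter, mem_singleton]
      exact ⟨fun hx => hf hx.1 he hx.2, by rintro rfl; exact ⟨he, rfl⟩⟩
    rw [hfibre, card_singleton]
    exact odd_one

theorem oddImage_insert_insert_of_map_eq {a b : G.E} {C : Finset G.E} (ha : a ∉ insert b C)
    (hb : b ∉ C) (hab : f a = f b) :
    oddImage G H f (insert a (insert b C)) = oddImage G H f C := by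
  ext e'
  simp only [oddImage, mem_filter, mem_univ, true_and]
  by_cases he' : f b = e'
  · rw [filter_insert, if_pos (hab.trans he'),
      card_insert_of_notMem fun h => ha (mem_of_mem_filter _ h), filter_insert, if_pos he',
      card_insert_of_notMem fun h => hb (mem_of_mem_filter _ h),
      Nat.odd_add_one, Nat.odd_add_one, not_not]
  · rw [filter_insert, filter_insert, if_neg (hab ▸ he'), if_neg he']

theorem CycleContinuous.map_ne_of_isCut_triple (hf : CycleContinuous G H f) (hH : H.Bridgeless)
    {a b c : G.E} (hab : a ≠ b) (hac : a ≠ c) (hbc : b ≠ c) (hcut : G.IsCut {a, b, c}) :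
    f a ≠ f b := by
  intro hfab
  have hc := hf.isCut_oddImage hcut
  rw [oddImage_insert_insert_of_map_eq (by simp [hab, hac]) (by simpa using hbc) hfab,
    oddImage_eq_image_of_injOn (by simp), image_singleton] at hc
  exact hH _ hc (card_singleton _)

end OddImage

end Multigraph

open Multigraph in
/-- a cycle-continuous mapping to a bridgeless graph sends 3-edge-cuts
to 3-edge-cuts, the three images being distinct. -/
theorem image_of_threeCut (G H : Multigraph) (f : G.E → H.E)
    (hf : CycleContinuous G H f) (hH : H.Bridgeless)
    (e₁ e₂ e₃ : G.E) (h12 : e₁ ≠ e₂) (h13 : e₁ ≠ e₃) (h23 : e₂ ≠ e₃)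
    (hcut : G.IsCut {e₁, e₂, e₃}) :
    f e₁ ≠ f e₂ ∧ f e₁ ≠ f e₃ ∧ f e₂ ≠ f e₃ ∧ H.IsCut {f e₁, f e₂, f e₃} := by
  have hf₁₂ := hf.map_ne_of_isCut_triple hH h12 h13 h23 hcut
  have hf₁₃ := hf.map_ne_of_isCut_triple hH h13 h12 h23.symm (by rwa [Finset.pair_comm e₃])
  have hf₂₃ := hf.map_ne_of_isCut_triple hH h23 h12.symm h13.symm
    (by rwa [Finset.pair_comm e₃, Finset.insert_comm e₂])
  have hinj : Set.InjOn f ({e₁, e₂, e₃} : Finset G.E) := by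
    intro x hx y hy hxy
    simp only [coe_insert, coe_singleton, Set.mem_insert_iff, Set.mem_singleton_iff] at hx hy
    rcases hx with rfl | rfl | rfl <;> rcases hy with rfl | rfl | rfl <;> grind
  refine ⟨hf₁₂, hf₁₃, hf₂₃, ?_⟩
  simpa [oddImage_eq_image_of_injOn hinj] using hf.isCut_oddImage hcut
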